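/- Let r, λ > 0, a = 2 + r/λ, b = r/(r+λ), c ∈ [1, 1+b), and T exponential with rate λ generating its natural filtration. Define Y_t = (a - e^{-rt}b)·1_{t<T} + e^{-rT}c·1_{t≥T}. Then Y is a strict supermartingale: for all 0 ≤ s < t, E[Y_t | 𝓕_s] < Y_s almost surely on {s < T}. -/

import Mathlib

/-!
On `{s < T}` every generator `u j = 1_{T ≤ j}`, `j ≤ s`, of `𝓕_s` vanishes, so `E[Y_t | 𝓕_s]` is
constant there and equals the average of `Y_t` over `{s < T}`. Bounding the follower payoff
`e^{-rT} c` by `e^{-rs} c` on `{s < T ≤ t}` reduces the claim to an inequality between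
exponentials, which follows from `1 - e^{-x} ≤ x ≤ e^x - 1` together with `a ≥ 1 + b + r/λ`,
`b (r + λ) ≤ r` and `c < 1 + b`.
-/

open MeasureTheory Real

theorem waiting_bound_lt_leader_payoff {r lam a b c s t : ℝ} (hr : 0 < r) (hlam : 0 < lam)
    (hb0 : 0 ≤ b) (hb : b * (r + lam) ≤ r) (ha : 1 + b + r / lam ≤ a) (hc : c < 1 + b)
    (hs : 0 ≤ s) (hst : s < t) :
    exp (-r * s) * c * exp (-lam * s) + (a - exp (-r * t) * b - exp (-r * s) * c) * exp (-lam * t)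
      < (a - exp (-r * s) * b) * exp (-lam * s) := by
  obtain ⟨δ, hδ, rfl⟩ : ∃ δ, 0 < δ ∧ t = s + δ := ⟨t - s, sub_pos.mpr hst, by ring⟩
  have hEs0 : 0 < exp (-r * s) := exp_pos _
  have hEs1 : exp (-r * s) ≤ 1 := exp_le_one_iff.mpr (by nlinarith)
  have hq0 : 0 < exp (-lam * (s + δ)) := exp_pos _
  have hE : exp (-r * s) - exp (-r * (s + δ)) ≤ r * δ := by
    have hy := add_one_le_exp (-(r * δ))
    have hEt : exp (-r * (s + δ)) = exp (-r * s) * exp (-(r * δ)) := by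
      rw [← exp_add]; ring_nf
    calc exp (-r * s) - exp (-r * (s + δ)) = exp (-r * s) * (1 - exp (-(r * δ))) := by
          rw [hEt]; ring
      _ ≤ 1 - exp (-(r * δ)) :=
          mul_le_of_le_one_left (sub_nonneg.mpr (exp_le_one_iff.mpr (by nlinarith))) hEs1
      _ ≤ r * δ := by linarith
  have hpq : exp (-lam * (s + δ)) * (lam * δ) ≤ exp (-lam * s) - exp (-lam * (s + δ)) := by
    have hx := add_one_le_exp (lam * δ)
    have hp : exp (-lam * s) = exp (-lam * (s + δ)) * exp (lam * δ) := by
      rw [← exp_add]; ring_nf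
    rw [hp]
    nlinarith [mul_le_mul_of_nonneg_left hx hq0.le]
  have hgap : r / lam - b < a - exp (-r * s) * b - exp (-r * s) * c := by
    nlinarith
  have hrb : b * r ≤ (r / lam - b) * lam := by
    rw [sub_mul, div_mul_cancel₀ _ hlam.ne']
    linarith
  have hrb0 : 0 ≤ r / lam - b := by
    nlinarith [mul_nonneg hb0 hr.le]
  suffices (exp (-r * s) - exp (-r * (s + δ))) * b * exp (-lam * (s + δ))
      < (a - exp (-r * s) * b - exp (-r * s) * c) * (exp (-lam * s) - exp (-lam * (s + δ))) by
    linarith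
  calc (exp (-r * s) - exp (-r * (s + δ))) * b * exp (-lam * (s + δ))
      ≤ r * δ * b * exp (-lam * (s + δ)) := by gcongr
    _ = b * r * (δ * exp (-lam * (s + δ))) := by ring
    _ ≤ (r / lam - b) * lam * (δ * exp (-lam * (s + δ))) := by gcongr
    _ = (r / lam - b) * (exp (-lam * (s + δ)) * (lam * δ)) := by ring
    _ ≤ (r / lam - b) * (exp (-lam * s) - exp (-lam * (s + δ))) := by gcongr
    _ < _ := by gcongr; nlinarith [mul_pos hq0 (mul_pos hlam hδ)]

theorem measureReal_setOf_lt_eq_exp {Ω : Type*} {m : MeasurableSpace Ω} {μ : Measure Ω}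
    [IsProbabilityMeasure μ] {T : Ω → ℝ} {lam : ℝ} (hT : Measurable T)
    (hlam : 0 ≤ lam)
    (hTexp : ∀ z : ℝ, 0 ≤ z → μ {ω | T ω ≤ z} = ENNReal.ofReal (1 - exp (-lam * z)))
    {z : ℝ} (hz : 0 ≤ z) :
    μ.real {ω | z < T ω} = exp (-lam * z) := by
  have hcompl : {ω | z < T ω} = {ω | T ω ≤ z}ᶜ := by ext; simp
  have hexp : exp (-lam * z) ≤ 1 := exp_le_one_iff.mpr (by nlinarith)
  rw [hcompl, probReal_compl_eq_one_sub (measurableSet_le hT measurable_const), measureReal_def,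
    hTexp z hz, ENNReal.toReal_ofReal (by linarith)]
  ring

theorem measureReal_mul_condExp_eq_setIntegral {Ω : Type*} {m m₀ : MeasurableSpace Ω}
    {μ : Measure Ω} (hm : m ≤ m₀) [SigmaFinite (μ.trim hm)] {f : Ω → ℝ} (hf : Integrable f μ)
    {S : Set Ω} (hS : MeasurableSet[m] S) {ω : Ω} (hconst : ∀ ω' ∈ S, μ[f | m] ω' = μ[f | m] ω) :
    μ.real S * μ[f | m] ω = ∫ x in S, f x ∂μ := by
  rw [← setIntegral_condExp hm hf hS, setIntegral_congr_fun (hm S hS) hconst, setIntegral_const,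
    smul_eq_mul]

section WaitingPayoff

variable {Ω : Type*} {m : MeasurableSpace Ω} {μ : Measure Ω} {T : Ω → ℝ} {r a b c : ℝ}

noncomputable def waitingPayoff (r a b c : ℝ) (T : Ω → ℝ) (t : ℝ) (ω : Ω) : ℝ :=
  if t < T ω then a - exp (-r * t) * b else exp (-r * T ω) * c

theorem integrable_waitingPayoff [IsFiniteMeasure μ] (hr : 0 ≤ r) (hT : Measurable T)
    (hT0 : ∀ᵐ ω ∂μ, 0 ≤ T ω) (t : ℝ) :
    Integrable (waitingPayoff r a b c T t) μ := by
  have hmeas : Measurable (waitingPayoff r a b c T t) :=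
    Measurable.ite (measurableSet_lt measurable_const hT) measurable_const (by fun_prop)
  refine .of_bound hmeas.aestronglyMeasurable (|a - exp (-r * t) * b| + |c|) ?_
  filter_upwards [hT0] with ω hω
  rw [waitingPayoff, Real.norm_eq_abs]
  split_ifs
  · linarith [abs_nonneg c]
  · rw [abs_mul, abs_of_pos (exp_pos _)]
    have : exp (-r * T ω) ≤ 1 := exp_le_one_iff.mpr (by nlinarith)
    nlinarith [abs_nonneg c, abs_nonneg (a - exp (-r * t) * b)]

/-- After `s`, the follower payoff `e^{-rT} c` is at most `e^{-rs} c`. -/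
theorem setIntegral_waitingPayoff_le [IsFiniteMeasure μ] (hr : 0 ≤ r) (hc : 0 ≤ c)
    (hT : Measurable T) {s t : ℝ} (hint : Integrable (waitingPayoff r a b c T t) μ)
    (hst : s ≤ t) :
    ∫ ω in {ω | s < T ω}, waitingPayoff r a b c T t ω ∂μ
      ≤ exp (-r * s) * c * μ.real {ω | s < T ω}
        + (a - exp (-r * t) * b - exp (-r * s) * c) * μ.real {ω | t < T ω} := by
  set S := {ω | s < T ω}
  set P := {ω | t < T ω}
  have hS : MeasurableSet S := measurableSet_lt measurable_const hT
  have hP : MeasurableSet P := measurableSet_lt measurable_const hT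
  have hPS : P ∩ S = P := Set.inter_eq_left.mpr fun ω hω => lt_of_le_of_lt hst hω
  set bound : Ω → ℝ := fun ω =>
    exp (-r * s) * c + P.indicator (fun _ => a - exp (-r * t) * b - exp (-r * s) * c) ω
  have hle : ∀ ω ∈ S, waitingPayoff r a b c T t ω ≤ bound ω := by
    intro ω hω
    by_cases hωP : t < T ω
    · simp [bound, waitingPayoff, hωP, P]
    · have : exp (-r * T ω) ≤ exp (-r * s) :=
        exp_le_exp.mpr (by nlinarith [show s < T ω from hω])
      simp only [bound, waitingPayoff, hωP, P, if_false, Set.indicator_of_notMem,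
        Set.mem_ofPred_eq, not_false_eq_true, add_zero]
      nlinarith
  have hbound_int : Integrable bound μ :=
    (integrable_const _).add ((integrable_const _).indicator hP)
  calc ∫ ω in S, waitingPayoff r a b c T t ω ∂μ
      ≤ ∫ ω in S, bound ω ∂μ :=
        setIntegral_mono_on hint.integrableOn hbound_int.integrableOn hS hle
    _ = _ := by
      rw [integral_add (integrable_const _) ((integrable_const _).indicator hP),
        integral_indicator hP, setIntegral_const, setIntegral_const, measureReal_restrict_apply hP,
        hPS, smul_eq_mul, smul_eq_mul]
      ring

end WaitingPayoff

theorem eq_of_stronglyMeasurable_natural {Ω ι β γ : Type*} {m : MeasurableSpace Ω} [Preorder ι]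
    [TopologicalSpace β] [TopologicalSpace.MetrizableSpace β] [MeasurableSpace β] [BorelSpace β]
    [TopologicalSpace γ] [TopologicalSpace.PseudoMetrizableSpace γ] [T1Space γ]
    {u : ι → Ω → β} {hu : ∀ i, StronglyMeasurable (u i)} {i : ι} {g : Ω → γ}
    (hg : StronglyMeasurable[Filtration.natural u hu i] g) {ω ω' : Ω}
    (h : ∀ j ≤ i, u j ω = u j ω') : g ω = g ω' :=
  (hg.mono (Filtration.natural_eq_comap u hu i).le).factorsThrough (funext fun j => h j j.2)

section JumpProcess

variable {Ω : Type*} {m : MeasurableSpace Ω} {T : Ω → ℝ} {u : ℝ → Ω → ℝ}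
  {hu : ∀ s, StronglyMeasurable (u s)} {s : ℝ}

theorem measurableSet_natural_setOf_lt (hu_def : ∀ s ω, u s ω = if T ω ≤ s then 1 else 0) :
    MeasurableSet[Filtration.natural u hu s] {ω | s < T ω} := by
  have hS_eq : {ω | s < T ω} = u s ⁻¹' {0} := by
    ext ω
    simp only [Set.mem_ofPred_eq, Set.mem_preimage, Set.mem_singleton_iff, hu_def]
    split_ifs with h
    · simp [h]
    · simpa using h
  rw [hS_eq]
  exact (Filtration.stronglyAdapted_natural hu s).measurable (measurableSet_singleton 0)

theorem eq_of_stronglyMeasurable_natural_of_lt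
    (hu_def : ∀ s ω, u s ω = if T ω ≤ s then 1 else 0) {g : Ω → ℝ}
    (hg : StronglyMeasurable[Filtration.natural u hu s] g) {ω ω' : Ω} (hω : s < T ω)
    (hω' : s < T ω') : g ω = g ω' := by
  refine eq_of_stronglyMeasurable_natural hg fun j hj => ?_
  rw [hu_def, hu_def, if_neg (by linarith), if_neg (by linarith)]

end JumpProcess

/-- In the jump example, the waiting payoff
`Y_t = (a - e^{-rt}b) 1_{t<T} + e^{-rT}c 1_{t≥T}` is a strict supermartingale:
for `0 ≤ s < t`, `E[Y_t | 𝓕_s] < Y_s` a.s. on `{s < T}`. -/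
theorem waiting_payoff_strict_supermartingale
    {Ω : Type*} {m : MeasurableSpace Ω} (μ : MeasureTheory.Measure Ω)
    [MeasureTheory.IsProbabilityMeasure μ]
    (r lam : ℝ) (hr : 0 < r) (hlam : 0 < lam)
    (a b c : ℝ) (ha : a = 2 + r / lam) (hb : b = r / (r + lam))
    (hc : c ∈ Set.Ico (1 : ℝ) (1 + b))
    (T : Ω → ℝ) (hT : Measurable T)
    (hTexp : ∀ z : ℝ, 0 ≤ z → μ {ω | T ω ≤ z} = ENNReal.ofReal (1 - Real.exp (-lam * z)))
    (u : ℝ → Ω → ℝ) (hu_def : ∀ s ω, u s ω = if T ω ≤ s then 1 else 0)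
    (hu : ∀ s, MeasureTheory.StronglyMeasurable (u s))
    (Y : ℝ → Ω → ℝ)
    (hY : ∀ t ω, Y t ω =
      if t < T ω then a - Real.exp (-r * t) * b else Real.exp (-r * T ω) * c) :
    ∀ s t : ℝ, 0 ≤ s → s < t →
      ∀ᵐ ω ∂μ, s < T ω →
        (μ[Y t | (MeasureTheory.Filtration.natural u hu) s]) ω < Y s ω := by
  intro s t hs hst
  obtain ⟨hc1, hc2⟩ := hc
  obtain rfl : Y = waitingPayoff r a b c T := funext fun t => funext (hY t)
  have hb0 : 0 ≤ b := by rw [hb]; positivity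
  have hb_le : b * (r + lam) ≤ r := by rw [hb, div_mul_cancel₀ _ (by positivity)]
  have ha_ge : 1 + b + r / lam ≤ a := by
    have : b ≤ 1 := by rw [hb, div_le_one (by positivity)]; linarith
    linarith
  have hT_pos : ∀ᵐ ω ∂μ, 0 < T ω := by simpa [ae_iff] using hTexp 0 le_rfl
  have hint : Integrable (waitingPayoff r a b c T t) μ :=
    integrable_waitingPayoff hr.le hT (hT_pos.mono fun _ h => h.le) t
  have hμS := measureReal_setOf_lt_eq_exp hT hlam.le hTexp hs
  have hμP := measureReal_setOf_lt_eq_exp hT hlam.le hTexp (hs.trans hst.le)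
  refine ae_of_all μ fun ω hω => ?_
  have hmean := measureReal_mul_condExp_eq_setIntegral ((Filtration.natural u hu).le s) hint
    (measurableSet_natural_setOf_lt hu_def) fun ω' hω' =>
      eq_of_stronglyMeasurable_natural_of_lt hu_def stronglyMeasurable_condExp hω' hω
  have hbound := setIntegral_waitingPayoff_le hr.le (by linarith) hT hint hst.le
  have hgain := waiting_bound_lt_leader_payoff hr hlam hb0 hb_le ha_ge hc2 hs hst
  rw [hμS, hμP] at hbound
  rw [hμS] at hmean
  rw [show waitingPayoff r a b c T s ω = a - exp (-r * s) * b from if_pos hω]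
  exact lt_of_mul_lt_mul_left (a := exp (-lam * s)) (by linarith) (exp_pos _).le
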